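/- arXiv:1102.3733 — 2 statements merged into one kernel-verified Lean document; each statement's English description precedes it below -/
import Mathlib

section
/- For every left head variable free ATRS R, the rewrite relations of R and of its η-saturation R_η coincide: →_R = →_{R_η}. -/
/-- First-order terms over a signature `F` with arity function `ar` and variables `V`. -/
inductive Term (F : Type) (ar : F → ℕ) (V : Type) : Type where
  | var : V → Term F ar V
  | app : (f : F) → (Fin (ar f) → Term F ar V) → Term F ar V

namespace Term

variable {F V : Type} {ar : F → ℕ}

/-- Application of a substitution. -/
def subst (σ : V → Term F ar V) : Term F ar V → Term F ar V
  | .var x => σ x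
  | .app f ts => .app f (fun i => (ts i).subst σ)

/-- Size of a term. -/
def size : Term F ar V → ℕ
  | .var _ => 1
  | .app _ ts => 1 + ∑ i, (ts i).size

end Term

section Rewriting

variable {F V : Type} {ar : F → ℕ}

/-- The (reflexive) subterm relation: `Subterm u t` means `u` occurs in `t`. -/
inductive Subterm : Term F ar V → Term F ar V → Prop where
  | refl (t) : Subterm t t
  | app (f) (ts : Fin (ar f) → Term F ar V) (i) (u) :
      Subterm u (ts i) → Subterm u (.app f ts)

/-- Proper subterm: `PSub u t` means `u` is a proper subterm of `t`. -/
def PSub (u t : Term F ar V) : Prop :=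
  ∃ (f : F) (ts : Fin (ar f) → Term F ar V) (i : Fin (ar f)),
    t = Term.app f ts ∧ Subterm u (ts i)

/-- One-step rewrite relation of a TRS `R`: closure of the rules under
contexts and substitutions. -/
inductive Rew (R : Set (Term F ar V × Term F ar V)) : Term F ar V → Term F ar V → Prop where
  | rule (l r : Term F ar V) (σ : V → Term F ar V) :
      (l, r) ∈ R → Rew R (l.subst σ) (r.subst σ)
  | congr (f : F) (ts : Fin (ar f) → Term F ar V) (i : Fin (ar f)) (u : Term F ar V) :
      Rew R (ts i) u → Rew R (.app f ts) (.app f (Function.update ts i u))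

/-- Many-step rewriting. -/
def RStar (R : Set (Term F ar V × Term F ar V)) : Term F ar V → Term F ar V → Prop :=
  Relation.ReflTransGen (Rew R)

/-- Normal forms. -/
def NF (R : Set (Term F ar V × Term F ar V)) (t : Term F ar V) : Prop := ∀ u, ¬ Rew R t u

/-- `t` rewrites to the normal form `u` (w.r.t. `R`). -/
def NormTo (R : Set (Term F ar V × Term F ar V)) (t u : Term F ar V) : Prop :=
  RStar R t u ∧ NF R u

/-- Termination: the rewrite relation is well-founded. -/
def Terminating (R : Set (Term F ar V × Term F ar V)) : Prop :=
  WellFounded (fun t s => Rew R s t)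

/-- Confluence. -/
def Confluent (R : Set (Term F ar V × Term F ar V)) : Prop :=
  ∀ s t u, RStar R s t → RStar R s u → ∃ v, RStar R t v ∧ RStar R u v

/-- Innermost one-step rewriting: the contracted redex has only normal
proper subterms. -/
inductive IRew (R : Set (Term F ar V × Term F ar V)) : Term F ar V → Term F ar V → Prop where
  | rule (l r : Term F ar V) (σ : V → Term F ar V) :
      (l, r) ∈ R → (∀ u, PSub u (l.subst σ) → NF R u) →
      IRew R (l.subst σ) (r.subst σ)
  | congr (f : F) (ts : Fin (ar f) → Term F ar V) (i : Fin (ar f)) (u : Term F ar V) :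
      IRew R (ts i) u → IRew R (.app f ts) (.app f (Function.update ts i u))

/-- Innermost termination. -/
def ITerminating (R : Set (Term F ar V × Term F ar V)) : Prop :=
  WellFounded (fun t s => IRew R s t)

/-- `m`-fold composition of a relation. -/
def RelPow (r : α → α → Prop) : ℕ → α → α → Prop
  | 0 => Eq
  | n + 1 => fun a c => ∃ b, r a b ∧ RelPow r n b c

/-- Derivation height of `t` w.r.t. a relation. -/
noncomputable def dh (r : α → α → Prop) (t : α) : ℕ :=
  sSup { m | ∃ u, RelPow r m t u }

/-- Derivational complexity w.r.t. a relation, restricted to starting terms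
satisfying `P`. -/
noncomputable def dcOn {F V : Type} {ar : F → ℕ}
    (r : Term F ar V → Term F ar V → Prop) (P : Term F ar V → Prop) (n : ℕ) : ℕ :=
  sSup { m | ∃ t, P t ∧ t.size ≤ n ∧ m = dh r t }

/-- `f ∈ O(g)`. -/
def BigO (f g : ℕ → ℕ) : Prop := ∃ M N : ℕ, ∀ n, f n ≤ M * g n + N

end Rewriting
section ATRS

/-- Signature for (un)curried applicative systems: `none` is the binary
application symbol `∘`, and `some (c, i)` is the symbol `c_i` of arity `i`
(with `c_0 = c` an applicative constant). -/
abbrev USig (C : Type) := Option (C × ℕ)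

/-- Arity function for `USig`. -/
def uar {C : Type} : USig C → ℕ
  | none => 2
  | some (_, i) => i

/-- Terms over the signature `USig C` (variables are natural numbers). -/
abbrev ATerm (C : Type) := Term (USig C) uar ℕ

variable {C : Type}

/-- Binary application `s ∘ t`. -/
def appT (s t : ATerm C) : ATerm C :=
  .app none (fun i => if i.1 = 0 then s else t)

/-- The applicative constant `c` (i.e. `c_0`). -/
def constT (c : C) : ATerm C :=
  .app (some (c, 0)) (fun i => (Nat.not_lt_zero _ i.isLt).elim)

/-- Symbols of a purely applicative term: only `∘` and constants `c_0`. -/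
def ApplicativeSym : USig C → Prop
  | none => True
  | some (_, i) => i = 0

/-- A term over the applicative signature (constants plus `∘`). -/
def ApplicativeT (t : ATerm C) : Prop :=
  ∀ (u : ATerm C) (f : USig C) (ts : Fin (uar f) → ATerm C),
    Subterm u t → u = Term.app f ts → ApplicativeSym f

/-- `headCount t = some (c, n)` iff `t = c ∘ t₁ ∘ ⋯ ∘ tₙ` for some terms `tᵢ`. -/
def headCount : ATerm C → Option (C × ℕ)
  | .var _ => none
  | .app none ts => (headCount (ts ⟨0, by simp [uar]⟩)).map (fun p => (p.1, p.2 + 1))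
  | .app (some (_, _ + 1)) _ => none
  | .app (some (c, 0)) _ => some (c, 0)

/-- The spine `c ∘ t₁ ∘ ⋯ ∘ tₙ` occurs as a subterm of a left- or
right-hand side of `R`. -/
def SpineIn (R : Set (ATerm C × ATerm C)) (c : C) (n : ℕ) : Prop :=
  ∃ p ∈ R, ∃ t : ATerm C, (Subterm t p.1 ∨ Subterm t p.2) ∧ headCount t = some (c, n)

/-- `aa` is the applicative-arity function of `R`: `aa c` is the maximal `n`
such that `c ∘ t₁ ∘ ⋯ ∘ tₙ` occurs in a rule of `R` (and `0` if `c` does not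
occur applied). -/
def AASpec (R : Set (ATerm C × ATerm C)) (aa : C → ℕ) : Prop :=
  ∀ c : C, (∀ n, SpineIn R c n → n ≤ aa c) ∧ (aa c = 0 ∨ SpineIn R c (aa c))

/-- A term is head variable free if no subterm is of the form `x ∘ v` with
`x` a variable. -/
def HeadVarFree (t : ATerm C) : Prop :=
  ∀ u : ATerm C, Subterm u t → ∀ (x : ℕ) (v : ATerm C), u ≠ appT (.var x) v

/-- Basic well-formedness of an applicative TRS: left-hand sides are not
variables, right-hand side variables occur on the left, and both sides are
applicative terms. -/
def IsATRS (R : Set (ATerm C × ATerm C)) : Prop :=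
  ∀ p ∈ R, (∀ x : ℕ, p.1 ≠ Term.var x) ∧
    (∀ x : ℕ, Subterm (.var x) p.2 → Subterm (.var x) p.1) ∧
    ApplicativeT p.1 ∧ ApplicativeT p.2

/-- `R` is left head variable free. -/
def LHVF (R : Set (ATerm C × ATerm C)) : Prop := ∀ p ∈ R, HeadVarFree p.1

/-- The variables `x_0, …, x_{i-1}`. -/
def uvars (i : ℕ) : Fin i → ATerm C := fun j => .var j.1

/-- The term `f_i(x_0,…,x_{i-1})`. -/
def fiT (c : C) (i : ℕ) : ATerm C := .app (some (c, i)) (fun j => .var j.1)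

/-- The uncurrying system `U`, with rules
`c_i(x_1,…,x_i) ∘ y → c_{i+1}(x_1,…,x_i,y)` for all `0 ≤ i < aa c`. -/
def USys (aa : C → ℕ) : Set (ATerm C × ATerm C) :=
  { p | ∃ (c : C) (i : ℕ), i < aa c ∧
      p = (appT (fiT c i) (.var i), fiT c (i + 1)) }

/-- The currying system `C(F)` (for a signature with arities `arF`), with
rules `f_{i+1}(x_1,…,x_i,y) → f_i(x_1,…,x_i) ∘ y` for all `0 ≤ i < arF f`
(where `f_{arF f}` plays the role of `f`). -/
def CurrySys {F : Type} (arF : F → ℕ) : Set (ATerm F × ATerm F) :=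
  { p | ∃ (f : F) (i : ℕ), i < arF f ∧
      p = (fiT f (i + 1), appT (fiT f i) (.var i)) }

/-- The η-saturation `R_η` of `R` (w.r.t. applicative arities `aa`). -/
inductive Eta (aa : C → ℕ) (R : Set (ATerm C × ATerm C)) : ATerm C × ATerm C → Prop where
  | base (p) : p ∈ R → Eta aa R p
  | eta (l r : ATerm C) (c : C) (n x : ℕ) :
      Eta aa R (l, r) → headCount l = some (c, n) → n < aa c →
      ¬ Subterm (.var x) l → ¬ Subterm (.var x) r →
      Eta aa R (appT l (.var x), appT r (.var x))

/-- The uncurried system `R_η↓`: the rules of `R_η` with both sides in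
`U`-normal form. -/
def EtaDown (aa : C → ℕ) (R : Set (ATerm C × ATerm C)) : Set (ATerm C × ATerm C) :=
  { p | ∃ l r : ATerm C, Eta aa R (l, r) ∧
      NormTo (USys aa) l p.1 ∧ NormTo (USys aa) r p.2 }

/-- The transformed system `U↓(R) = R_η↓ ∪ U(R)`. -/
def UD (aa : C → ℕ) (R : Set (ATerm C × ATerm C)) : Set (ATerm C × ATerm C) :=
  EtaDown aa R ∪ USys aa

/-- Symbols of the signature of `U↓(R)`: `∘` and `c_i` with `i ≤ aa c`. -/
def GoodSym (aa : C → ℕ) : USig C → Prop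
  | none => True
  | some (c, i) => i ≤ aa c

/-- A term over the signature of `U↓(R)`. -/
def GoodTerm (aa : C → ℕ) (t : ATerm C) : Prop :=
  ∀ (u : ATerm C) (f : USig C) (ts : Fin (uar f) → ATerm C),
    Subterm u t → u = Term.app f ts → GoodSym aa f

/-- `C'`: curry a term over the signature of `U↓(R)` and identify all
symbols `c_i` originating from the same constant `c`. -/
def curryId : ATerm C → ATerm C
  | .var x => .var x
  | .app none ts => appT (curryId (ts ⟨0, by simp [uar]⟩)) (curryId (ts ⟨1, by simp [uar]⟩))
  | .app (some (c, i)) ts =>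
      (List.ofFn (fun j : Fin (uar (some (c, i))) => curryId (ts j))).foldl appT (constT c)

end ATRS

/-! A rule `ℓ ∘ x → r ∘ x` of `R_η` is the rule `ℓ → r` applied in the context `□ ∘ x`, so every
`R_η`-step is an `R`-step; conversely `R ⊆ R_η`. -/

theorem Rew.of_rules {F V : Type} {ar : F → ℕ} {R S : Set (Term F ar V × Term F ar V)}
    (hS : ∀ l r σ, (l, r) ∈ S → Rew R (l.subst σ) (r.subst σ)) {s t : Term F ar V}
    (h : Rew S s t) : Rew R s t := by
  induction h with
  | rule l r σ hlr => exact hS l r σ hlr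
  | congr f ts i u _ ih => exact Rew.congr f ts i u ih

theorem Rew.mono {F V : Type} {ar : F → ℕ} {R S : Set (Term F ar V × Term F ar V)}
    (hRS : R ⊆ S) {s t : Term F ar V} (h : Rew R s t) : Rew S s t :=
  h.of_rules fun l r σ hlr => Rew.rule l r σ (hRS hlr)

section Applicative

variable {C : Type}

theorem appT_subst (σ : ℕ → ATerm C) (s t : ATerm C) :
    (appT s t).subst σ = appT (s.subst σ) (t.subst σ) := by
  simp only [appT, Term.subst]
  congr 1 with i
  split_ifs <;> rfl

theorem Rew.appT_left {R : Set (ATerm C × ATerm C)} {s s' : ATerm C} (t : ATerm C)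
    (h : Rew R s s') : Rew R (appT s t) (appT s' t) := by
  convert Rew.congr (R := R) none (fun i : Fin 2 => if i.1 = 0 then s else t) (0 : Fin 2) s' h
    using 2
  · rfl
  · simp only [appT]
    congr 1 with i
    fin_cases i <;> rfl

theorem Eta.rew {aa : C → ℕ} {R : Set (ATerm C × ATerm C)} {p : ATerm C × ATerm C}
    (hp : Eta aa R p) (σ : ℕ → ATerm C) : Rew R (p.1.subst σ) (p.2.subst σ) := by
  induction hp generalizing σ with
  | base p hp => exact Rew.rule p.1 p.2 σ hp
  | eta l r c n x _ _ _ _ _ ih =>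
    simpa only [appT_subst] using (ih σ).appT_left ((Term.var x).subst σ)

end Applicative

theorem rew_eta_eq_general {C : Type} (R : Set (ATerm C × ATerm C)) (aa : C → ℕ) :
    ∀ s t : ATerm C, Rew R s t ↔ Rew (Eta aa R) s t :=
  fun _ _ => ⟨Rew.mono fun _ => Eta.base _, Rew.of_rules fun _ _ σ h => Eta.rew h σ⟩

/-- for a left head variable free ATRS `R`,
`→_R = →_{R_η}`. -/
theorem rew_eta_eq {C : Type} (R : Set (ATerm C × ATerm C)) (aa : C → ℕ)
    (hR : IsATRS R) (hl : LHVF R) (haa : AASpec R aa) :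
    ∀ s t : ATerm C, Rew R s t ↔ Rew (Eta aa R) s t :=
  rew_eta_eq_general R aa
end

section
/- For the ATRS R = {f ∘ x → f ∘ x, f → g}, the innermost rewrite relation is well-founded (R is innermost terminating). -/
/-- The constants of the concrete example. -/
inductive FG : Type where
  | f : FG
  | g : FG

/-- The constant `f`. -/
def fT : ATerm FG := constT FG.f
/-- The constant `g`. -/
def gT : ATerm FG := constT FG.g
/-- The term `f₁(t)`. -/
def f1T (t : ATerm FG) : ATerm FG := Term.app (some (FG.f, 1)) (fun _ => t)

/-- The ATRS `R = {f ∘ x → f ∘ x, f → g}`. -/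
def Rfg : Set (ATerm FG × ATerm FG) :=
  {(appT fT (.var 0), appT fT (.var 0)), (fT, gT)}

/-- The TRS `U↓(R) = {f₁(x) → f₁(x), f → g, f₁(x) → g ∘ x, f ∘ x → f₁(x)}`. -/
def UDfg : Set (ATerm FG × ATerm FG) :=
  {(f1T (.var 0), f1T (.var 0)), (fT, gT),
   (f1T (.var 0), appT gT (.var 0)), (appT fT (.var 0), f1T (.var 0))}


deriving instance DecidableEq for FG

/-- Count of occurrences of the constant `f` (i.e. the symbol `f₀`). -/
def countF : ATerm FG → ℕ
  | .var _ => 0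
  | .app g ts =>
      (if g = some (FG.f, 0) then 1 else 0) + ∑ i, countF (ts i)

lemma fT_subst (σ : ℕ → ATerm FG) : fT.subst σ = fT := by
  show Term.app _ _ = Term.app _ _
  congr 1
  funext i
  exact (Nat.not_lt_zero _ i.isLt).elim

lemma gT_subst (σ : ℕ → ATerm FG) : gT.subst σ = gT := by
  show Term.app _ _ = Term.app _ _
  congr 1
  funext i
  exact (Nat.not_lt_zero _ i.isLt).elim

lemma countF_fT : countF fT = 1 := by
  show (if _ then 1 else 0) + _ = 1
  rw [Finset.sum_eq_zero (fun x _ => (Nat.not_lt_zero _ x.isLt).elim)]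
  simp

lemma countF_gT : countF gT = 0 := by
  show (if _ then 1 else 0) + _ = 0
  rw [Finset.sum_eq_zero (fun x _ => (Nat.not_lt_zero _ x.isLt).elim)]
  simp

lemma fT_not_NF : ¬ NF Rfg fT := by
  intro h
  apply h gT
  have := Rew.rule (R := Rfg) fT gT Term.var (by simp [Rfg])
  rwa [fT_subst, gT_subst] at this

lemma irew_countF_lt {t u : ATerm FG} (h : IRew Rfg t u) : countF u < countF t := by
  induction h with
  | rule l r σ hmem hnf =>
    have hcases : (l, r) = (appT fT (.var 0), appT fT (.var 0)) ∨ (l, r) = (fT, gT) := by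
      simpa [Rfg] using hmem
    rcases hcases with h1 | h2
    · exfalso
      injection h1 with hl hr
      apply fT_not_NF
      apply hnf fT
      refine ⟨none, fun i => (if i.1 = 0 then fT else Term.var 0).subst σ, ⟨0, by norm_num [uar]⟩,
        ?_, ?_⟩
      · rw [hl]; rfl
      · simpa [fT_subst] using Subterm.refl (fT : ATerm FG)
    · injection h2 with hl hr
      rw [hl, hr, fT_subst, gT_subst, countF_fT, countF_gT]
      norm_num
  | congr f ts i u h ih =>
    show (if _ then 1 else 0) + _ < (if _ then 1 else 0) + _
    apply Nat.add_lt_add_left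
    apply Finset.sum_lt_sum
    · intro j _
      by_cases hj : j = i
      · subst hj; rw [Function.update_self]; exact ih.le
      · rw [Function.update_of_ne hj]
    · exact ⟨i, Finset.mem_univ i, by rw [Function.update_self]; exact ih⟩


/-- the ATRS `R = {f ∘ x → f ∘ x, f → g}` is innermost
terminating. -/
theorem rfg_innermost_terminating : ITerminating Rfg := by
  have : Subrelation (fun t s => IRew Rfg s t) (InvImage (· < ·) countF) :=
    fun h => irew_countF_lt h
  exact this.wf (InvImage.wf countF Nat.lt_wfRel.wf)
end
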